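/- Let v(x,y,z) = (x²−y²−z²+1, 2xy+2z, 2xz−2y)/(x²+y²+z²+1) on ℝ³ and let 0 < h < 1, r = √(1−h²). Define the billiard map on points where it is given by B_h(q) = q + 2r·v((id − r·v)^{-1}(q)). Then B_h(x,0,0) = (x + 2√(1−h²), 0, 0) for all x ∈ ℝ, and consequently B_h^m(x,0,0) = (x + 2m√(1−h²), 0, 0) for all m ∈ ℕ. In particular the orbit of (x,0,0) under B_h is unbounded. -/

import Mathlib

/-- The point `(a,b,c)` of Euclidean 3-space. -/
noncomputable def pt3 (a b c : ℝ) : EuclideanSpace ℝ (Fin 3) :=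
  (WithLp.equiv 2 (Fin 3 → ℝ)).symm ![a, b, c]

/-- The stereographic projection of the Hopf vector field:
`v(x,y,z) = (x²−y²−z²+1, 2xy+2z, 2xz−2y)/(x²+y²+z²+1)`. -/
noncomputable def hopfField (p : EuclideanSpace ℝ (Fin 3)) : EuclideanSpace ℝ (Fin 3) :=
  ((p 0) ^ 2 + (p 1) ^ 2 + (p 2) ^ 2 + 1)⁻¹ •
    pt3 ((p 0) ^ 2 - (p 1) ^ 2 - (p 2) ^ 2 + 1)
      (2 * p 0 * p 1 + 2 * p 2)
      (2 * p 0 * p 2 - 2 * p 1)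

/-- The outer billiard map on the horosphere at height `h`, with `r = √(1−h²)`:
`B_h(q) = q + 2r·v((id − r·v)⁻¹(q))`. -/
noncomputable def billiard (r : ℝ) (q : EuclideanSpace ℝ (Fin 3)) : EuclideanSpace ℝ (Fin 3) :=
  q + (2 * r) • hopfField (Function.invFun (fun p => p - r • hopfField p) q)

/-! On the `x`-axis the field `v` is constantly `(1,0,0)`, so `(x + r, 0, 0)` is a preimage of
`(x, 0, 0)` under `id - r • v`, and it is the only one: off the axis the `y`- and `z`-components of
`p - r • v p` cannot both vanish. Hence `B_h` translates the axis by `2r`, and for `0 < h < 1`,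
where `r > 0`, the orbit of an axis point escapes to infinity. -/

open Filter Set Bornology

section
variable (a b c : ℝ)

@[simp] lemma pt3_apply_zero : pt3 a b c 0 = a := rfl
@[simp] lemma pt3_apply_one : pt3 a b c 1 = b := rfl
@[simp] lemma pt3_apply_two : pt3 a b c 2 = c := rfl

end

lemma norm_pt3_axis (a : ℝ) : ‖pt3 a 0 0‖ = |a| := by
  simp [EuclideanSpace.norm_eq, Fin.sum_univ_three, Real.sqrt_sq_eq_abs]

lemma hopfField_pt3_axis (a : ℝ) : hopfField (pt3 a 0 0) = pt3 1 0 0 := by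
  have ha : a ^ 2 + 1 ≠ 0 := by positivity
  ext i
  fin_cases i <;> simp [hopfField, field]

/-- With `w = b + ic` and `D = a² + b² + c² + 1`, the last two coordinates of the equation say
`w (D - 2ra + 2ri) = 0`, which forces `w = 0` since `D - 2ra + 2ri ≠ 0` for every real `r`. -/
lemma eq_pt3_add_of_sub_smul_hopfField_eq_pt3 {r x : ℝ} {p : EuclideanSpace ℝ (Fin 3)}
    (hp : p - r • hopfField p = pt3 x 0 0) : p = pt3 (x + r) 0 0 := by
  have coord (i : Fin 3) := congrFun (congrArg WithLp.ofLp hp) i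
  have e1 := coord 1
  have e2 := coord 2
  have hD : p 0 ^ 2 + p 1 ^ 2 + p 2 ^ 2 + 1 ≠ 0 := by positivity
  simp only [hopfField, PiLp.sub_apply, PiLp.smul_apply, pt3_apply_one, pt3_apply_two,
    smul_eq_mul] at e1 e2
  field_simp at e1 e2
  have hbc : p 1 ^ 2 + p 2 ^ 2 = 0 := by
    refine (mul_eq_zero.mp ?_).resolve_right hD
    linear_combination (p 1 - p 0 * p 2) * e1 + (p 2 + p 0 * p 1) * e2
  have hb : p 1 = 0 := by nlinarith [sq_nonneg (p 1), sq_nonneg (p 2)]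
  have hc : p 2 = 0 := by nlinarith [sq_nonneg (p 1), sq_nonneg (p 2)]
  have hp_axis : p = pt3 (p 0) 0 0 := by
    ext i
    fin_cases i <;> simp [hb, hc]
  rw [hp_axis, hopfField_pt3_axis] at hp
  have e0 := congrFun (congrArg WithLp.ofLp hp) 0
  simp only [PiLp.sub_apply, PiLp.smul_apply, pt3_apply_zero, smul_eq_mul, mul_one] at e0
  rw [hp_axis, ← e0, sub_add_cancel]

lemma billiard_pt3_axis (r x : ℝ) :
    billiard r (pt3 x 0 0) = pt3 (x + 2 * r) 0 0 := by
  have hpre : pt3 (x + r) 0 0 - r • hopfField (pt3 (x + r) 0 0) = pt3 x 0 0 := by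
    rw [hopfField_pt3_axis]
    ext i
    fin_cases i <;> simp
  have hinv := eq_pt3_add_of_sub_smul_hopfField_eq_pt3
    (Function.invFun_eq (f := fun p => p - r • hopfField p) ⟨_, hpre⟩)
  rw [billiard, hinv, hopfField_pt3_axis]
  ext i
  fin_cases i <;> simp

lemma iterate_billiard_pt3_axis (r x : ℝ) (m : ℕ) :
    (billiard r)^[m] (pt3 x 0 0) = pt3 (x + 2 * m * r) 0 0 := by
  induction m with
  | zero => simp
  | succ m ih =>
    rw [Function.iterate_succ_apply', ih, billiard_pt3_axis]
    congr 1
    push_cast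
    ring

lemma not_isBounded_range_of_tendsto_norm_atTop {ι E : Type*} [SeminormedAddGroup E]
    {l : Filter ι} [l.NeBot] {u : ι → E} (hu : Tendsto (fun i => ‖u i‖) l atTop) :
    ¬ IsBounded (range u) := by
  intro hb
  obtain ⟨C, hC⟩ := hb.exists_norm_le
  obtain ⟨i, hi⟩ := (hu.eventually_gt_atTop C).exists
  exact (hC _ (mem_range_self i)).not_gt hi

lemma tendsto_norm_pt3_axis_atTop {r : ℝ} (hr : 0 < r) (x : ℝ) :
    Tendsto (fun m : ℕ => ‖pt3 (x + 2 * m * r) 0 0‖) atTop atTop := by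
  simp only [norm_pt3_axis]
  refine tendsto_abs_atTop_atTop.comp (tendsto_atTop_add_const_left _ _ ?_)
  simp only [mul_comm (2 : ℝ), mul_assoc]
  exact tendsto_natCast_atTop_atTop.atTop_mul_const (by positivity)

/-- For `0 < h < 1` and `r = √(1−h²)`, the billiard map satisfies
`B_h(x,0,0) = (x + 2r, 0, 0)`, hence `B_h^m(x,0,0) = (x + 2mr, 0, 0)` for all `m ∈ ℕ`, and the
orbit of `(x,0,0)` is unbounded. -/
theorem billiard_axis_orbit_unbounded (h : ℝ) (hh0 : 0 < h) (hh1 : h < 1) (x : ℝ) :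
    billiard (Real.sqrt (1 - h ^ 2)) (pt3 x 0 0) =
      pt3 (x + 2 * Real.sqrt (1 - h ^ 2)) 0 0 ∧
    (∀ m : ℕ, (billiard (Real.sqrt (1 - h ^ 2)))^[m] (pt3 x 0 0) =
      pt3 (x + 2 * m * Real.sqrt (1 - h ^ 2)) 0 0) ∧
    ¬ Bornology.IsBounded
        (Set.range fun m : ℕ => (billiard (Real.sqrt (1 - h ^ 2)))^[m] (pt3 x 0 0)) := by
  have hr0 : 0 < Real.sqrt (1 - h ^ 2) := Real.sqrt_pos.mpr (by nlinarith)
  refine ⟨billiard_pt3_axis _ x, iterate_billiard_pt3_axis _ x, ?_⟩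
  simp only [iterate_billiard_pt3_axis]
  exact not_isBounded_range_of_tendsto_norm_atTop (tendsto_norm_pt3_axis_atTop hr0 x)
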